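/- arXiv:1803.02177 — 4 statements merged into one kernel-verified Lean document; each statement's English description precedes it below -/
import Mathlib

section
/- For every continuous function f : ℝ^d → ℝ there exists a homeomorphism ψ of ℝ^d onto itself such that the composition f ∘ ψ is uniformly continuous on ℝ^d. -/
/-!
Take `ψ` radial, `ψ x = (h ‖x‖ / ‖x‖) • x` with `h = T⁻¹` for an order automorphism `T` of `ℝ`
that expands faster and faster. Let `η j` be a modulus of uniform continuity of `f`, for the
tolerance `1 / (j + 1)`, on the ball of radius `j + 1`. Taking `T` the primitive of a step function
that is large enough on `[j - 1, ∞)`, the map `ψ` sends pairs of points at distance `≤ 1` near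
`ψ⁻¹ (sphere 0 j)` to pairs at distance `≤ η j`, so `f ∘ ψ` oscillates by at most `1 / (j + 1)`
there. Compactness takes care of any bounded region.
-/

open Metric Filter Function Topology

noncomputable section

section Radial

variable {E : Type*} [NormedAddCommGroup E] [NormedSpace ℝ E]

def radialMap (k : ℝ → ℝ) (x : E) : E := (k ‖x‖ / ‖x‖) • x

@[simp]
lemma radialMap_zero (k : ℝ → ℝ) : radialMap k (0 : E) = 0 := by
  simp [radialMap]

lemma norm_radialMap {k : ℝ → ℝ} (hk0 : k 0 = 0) (x : E) : ‖radialMap k x‖ = |k ‖x‖| := by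
  rcases eq_or_ne x 0 with rfl | hx
  · simp [hk0]
  · have hx : ‖x‖ ≠ 0 := norm_ne_zero_iff.mpr hx
    rw [radialMap, norm_smul, Real.norm_eq_abs, abs_div, abs_norm, div_mul_cancel₀ _ hx]

lemma continuous_radialMap {k : ℝ → ℝ} (hk : Continuous k) (hk0 : k 0 = 0) :
    Continuous (radialMap k : E → E) := by
  refine continuous_iff_continuousAt.mpr fun x => ?_
  rcases eq_or_ne x 0 with rfl | hx
  · have : Tendsto (fun y : E => |k ‖y‖|) (𝓝 0) (𝓝 0) := by
      have hcont : Continuous fun y : E => |k ‖y‖| := by fun_prop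
      simpa [hk0] using hcont.tendsto 0
    rw [ContinuousAt, radialMap_zero]
    exact squeeze_zero_norm (fun y => (norm_radialMap hk0 y).le) this
  · exact ((hk.comp continuous_norm).continuousAt.div continuous_norm.continuousAt
      (norm_ne_zero_iff.mpr hx)).smul continuousAt_id

lemma radialMap_radialMap {k₁ k₂ : ℝ → ℝ} (hk₁ : ∀ r, 0 < r → 0 < k₁ r)
    (hk : ∀ r, 0 < r → k₂ (k₁ r) = r) (x : E) : radialMap k₂ (radialMap k₁ x) = x := by
  rcases eq_or_ne x 0 with rfl | hx
  · simp
  · have hx : 0 < ‖x‖ := norm_pos_iff.mpr hx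
    have hkx := hk₁ _ hx
    have hnorm : ‖radialMap k₁ x‖ = k₁ ‖x‖ := by
      rw [radialMap, norm_smul, Real.norm_of_nonneg (by positivity), div_mul_cancel₀ _ hx.ne']
    rw [radialMap, hnorm, hk _ hx, radialMap, smul_smul, div_mul_div_cancel₀ hkx.ne',
      div_self hx.ne', one_smul]

lemma OrderIso.symm_map_zero (φ : ℝ ≃o ℝ) (hφ : φ 0 = 0) : φ.symm 0 = 0 := by
  rw [φ.symm_apply_eq, hφ]

def radialHomeomorph (φ : ℝ ≃o ℝ) (hφ : φ 0 = 0) : E ≃ₜ E where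
  toFun := radialMap φ
  invFun := radialMap φ.symm
  left_inv := radialMap_radialMap (fun _ hr => hφ ▸ φ.strictMono hr)
    (fun r _ => φ.symm_apply_apply r)
  right_inv := radialMap_radialMap (fun _ hr => φ.symm_map_zero hφ ▸ φ.symm.strictMono hr)
    (fun r _ => φ.apply_symm_apply r)
  continuous_toFun := continuous_radialMap φ.continuous hφ
  continuous_invFun := continuous_radialMap φ.symm.continuous (φ.symm_map_zero hφ)

/-- With `s = k ‖x‖ / ‖x‖` and `t = k ‖y‖ / ‖y‖`, the difference is `s • (x - y) + (s - t) • y`,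
and the second term has norm `|s ‖y‖ - k ‖y‖| ≤ s (‖x‖ - ‖y‖) + (k ‖x‖ - k ‖y‖)`. -/
lemma norm_radialMap_sub_le {k : ℝ → ℝ} {x y : E} (hyx : ‖y‖ ≤ ‖x‖) (hk : k ‖y‖ ≤ k ‖x‖)
    (hkx : 0 ≤ k ‖x‖) :
    ‖radialMap k x - radialMap k y‖ ≤ 2 * (k ‖x‖ / ‖x‖) * ‖x - y‖ + (k ‖x‖ - k ‖y‖) := by
  set s := k ‖x‖ / ‖x‖
  set t := k ‖y‖ / ‖y‖
  have hs : 0 ≤ s := by positivity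
  have hsub : radialMap k x - radialMap k y = s • (x - y) + (s - t) • y := by
    simp only [radialMap, smul_sub, sub_smul]
    abel
  have hdiff : ‖(s - t) • y‖ ≤ s * ‖x - y‖ + (k ‖x‖ - k ‖y‖) := by
    have hnorm_diff : ‖x‖ - ‖y‖ ≤ ‖x - y‖ := norm_sub_norm_le x y
    rw [norm_smul, Real.norm_eq_abs]
    rcases (norm_nonneg y).eq_or_lt with h | h
    · rw [← h] at hk
      rw [← h, mul_zero]
      have := mul_nonneg hs (norm_nonneg (x - y))
      linarith
    · have hsx : s * ‖x‖ = k ‖x‖ := div_mul_cancel₀ _ (h.trans_le hyx).ne'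
      have hty : t * ‖y‖ = k ‖y‖ := div_mul_cancel₀ _ h.ne'
      rw [← abs_of_pos h, ← abs_mul, abs_of_pos h, sub_mul, hty, abs_le]
      constructor <;> nlinarith
  calc ‖radialMap k x - radialMap k y‖
      ≤ ‖s • (x - y)‖ + ‖(s - t) • y‖ := hsub ▸ norm_add_le _ _
    _ ≤ s * ‖x - y‖ + (s * ‖x - y‖ + (k ‖x‖ - k ‖y‖)) := by
        rw [norm_smul, Real.norm_of_nonneg hs]
        gcongr
    _ = 2 * s * ‖x - y‖ + (k ‖x‖ - k ‖y‖) := by ring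

end Radial

lemma Monotone.mul_sub_le_intervalIntegral {G : ℝ → ℝ} (hG : Monotone G) {u v : ℝ}
    (huv : u ≤ v) : G u * (v - u) ≤ ∫ t in u..v, G t :=
  calc G u * (v - u) = ∫ _ in u..v, G u := by simp [mul_comm]
    _ ≤ ∫ t in u..v, G t := intervalIntegral.integral_mono_on huv intervalIntegrable_const
        hG.intervalIntegrable fun _ ht => hG ht.1

lemma Continuous.strictMono_surjective_of_expanding {F : ℝ → ℝ} (hF : Continuous F)
    (hexp : ∀ u v, u ≤ v → v - u ≤ F v - F u) : StrictMono F ∧ Surjective F := by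
  refine ⟨fun u v huv => by linarith [hexp u v huv.le], hF.surjective ?_ ?_⟩
  · refine tendsto_atTop_mono' _ ?_ (tendsto_atTop_add_const_right _ (F 0) tendsto_id)
    filter_upwards [eventually_ge_atTop 0] with v hv
    linarith [hexp 0 v hv, id_eq v]
  · refine tendsto_atBot_mono' _ ?_ (tendsto_atBot_add_const_right _ (F 0) tendsto_id)
    filter_upwards [eventually_le_atBot 0] with v hv
    linarith [hexp v 0 hv, id_eq v]

lemma exists_orderIso_expanding (c : ℕ → ℝ) :
    ∃ T : ℝ ≃o ℝ, T 0 = 0 ∧ (∀ u v, u ≤ v → v - u ≤ T v - T u) ∧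
      ∀ (j : ℕ) (u v : ℝ), (j : ℝ) - 1 ≤ u → u ≤ v → c j * (v - u) ≤ T v - T u := by
  set G : ℝ → ℝ := fun t => 1 + ∑ i ∈ Finset.range (⌊t⌋₊ + 2), |c i|
  have hG : Monotone G := fun s t hst => by
    simp only [G]
    gcongr
  have hG_one : ∀ t, 1 ≤ G t := fun t =>
    le_add_of_nonneg_right (Finset.sum_nonneg fun i _ => abs_nonneg (c i))
  have hG_c : ∀ (j : ℕ) t, (j : ℝ) - 1 ≤ t → c j ≤ G t := by
    intro j t ht
    have hj : j < ⌊t⌋₊ + 2 := by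
      have := Nat.lt_floor_add_one t
      exact_mod_cast (show (j : ℝ) < ⌊t⌋₊ + 2 by linarith)
    calc c j ≤ |c j| := le_abs_self _
      _ ≤ ∑ i ∈ Finset.range (⌊t⌋₊ + 2), |c i| :=
        Finset.single_le_sum (fun i _ => abs_nonneg (c i)) (Finset.mem_range.mpr hj)
      _ ≤ G t := le_add_of_nonneg_left zero_le_one
  set F : ℝ → ℝ := fun v => ∫ t in (0 : ℝ)..v, G t
  have hF : ∀ u v, u ≤ v → G u * (v - u) ≤ F v - F u := fun u v huv => by
    simp only [F]
    rw [intervalIntegral.integral_interval_sub_left hG.intervalIntegrable hG.intervalIntegrable]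
    exact hG.mul_sub_le_intervalIntegral huv
  have hF_exp : ∀ u v, u ≤ v → v - u ≤ F v - F u := fun u v huv =>
    le_trans (le_mul_of_one_le_left (sub_nonneg.mpr huv) (hG_one u)) (hF u v huv)
  obtain ⟨hmono, hsurj⟩ := (intervalIntegral.continuous_primitive
    (fun _ _ => hG.intervalIntegrable) 0).strictMono_surjective_of_expanding hF_exp
  refine ⟨hmono.orderIsoOfSurjective F hsurj, intervalIntegral.integral_same, hF_exp,
    fun j u v hu huv => ?_⟩
  exact le_trans (mul_le_mul_of_nonneg_right (hG_c j u hu) (sub_nonneg.mpr huv)) (hF u v huv)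

lemma uniformContinuous_of_forall_far {E X : Type*} [SeminormedAddCommGroup E] [ProperSpace E]
    [PseudoMetricSpace X] {g : E → X} (hg : Continuous g)
    (hfar : ∀ ε > 0, ∃ R, ∃ δ > 0, ∀ x y : E, ‖y‖ ≤ ‖x‖ → R < ‖x‖ → dist x y < δ →
      dist (g x) (g y) < ε) :
    UniformContinuous g := by
  refine Metric.uniformContinuous_iff.mpr fun ε hε => ?_
  obtain ⟨R, δ₁, hδ₁, hfar⟩ := hfar ε hε
  obtain ⟨δ₂, hδ₂, hnear⟩ := Metric.uniformContinuousOn_iff.mp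
    ((isCompact_closedBall (0 : E) R).uniformContinuousOn_of_continuous hg.continuousOn) ε hε
  have hle : ∀ x y : E, ‖y‖ ≤ ‖x‖ → dist x y < min δ₁ δ₂ → dist (g x) (g y) < ε := by
    intro x y hyx hxy
    by_cases hR : R < ‖x‖
    · exact hfar x y hyx hR (hxy.trans_le (min_le_left _ _))
    · have hR : ‖x‖ ≤ R := not_lt.mp hR
      exact hnear x (mem_closedBall_zero_iff.mpr hR) y
        (mem_closedBall_zero_iff.mpr (hyx.trans hR)) (hxy.trans_le (min_le_right _ _))
  refine ⟨min δ₁ δ₂, lt_min hδ₁ hδ₂, fun {x y} hxy => ?_⟩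
  rcases le_total ‖y‖ ‖x‖ with h | h
  · exact hle x y h hxy
  · rw [dist_comm] at hxy ⊢
    exact hle y x h hxy

section Contraction

variable {E : Type*} [NormedAddCommGroup E] [NormedSpace ℝ E] {T : ℝ ≃o ℝ}

lemma OrderIso.symm_nonneg (hT0 : T 0 = 0) {r : ℝ} (hr : 0 ≤ r) : 0 ≤ T.symm r :=
  T.symm_map_zero hT0 ▸ T.symm.monotone hr

lemma norm_radialMap_symm_sub_le (hT0 : T 0 = 0) (hT : ∀ u v, u ≤ v → v - u ≤ T v - T u)
    {j : ℕ} (hj : 1 ≤ j) {c : ℝ} (hc0 : 0 ≤ c)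
    (hc : ∀ u v, (j : ℝ) - 1 ≤ u → u ≤ v → c * (v - u) ≤ T v - T u) {x y : E}
    (hyx : ‖y‖ ≤ ‖x‖) (hxy : ‖x - y‖ ≤ 1) (hjx : (j : ℝ) ≤ T.symm ‖x‖)
    (hxj : T.symm ‖x‖ ≤ j + 1) :
    c * ‖radialMap T.symm x - radialMap T.symm y‖ ≤ 2 * j + 3 := by
  set v := T.symm ‖x‖
  set u := T.symm ‖y‖
  have huv : u ≤ v := T.symm.monotone hyx
  have hv : 0 ≤ v := T.symm_nonneg hT0 (norm_nonneg x)
  have hTuv : T v - T u ≤ 1 := by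
    simp only [v, u, T.apply_symm_apply]
    linarith [norm_sub_norm_le x y]
  have hgap : c * (v - u) ≤ 1 :=
    (hc u v (by linarith [hT u v huv]) huv).trans hTuv
  have hcx : c ≤ ‖x‖ := by
    have hj1 : (0 : ℝ) ≤ j - 1 := by
      rw [sub_nonneg]
      exact_mod_cast hj
    have hTj : 0 ≤ T (j - 1) := hT0 ▸ T.monotone hj1
    have := hc (j - 1) v le_rfl (by linarith)
    rw [T.apply_symm_apply] at this
    nlinarith
  have hslope : c * (v / ‖x‖) ≤ v := by
    rw [mul_div_left_comm]
    exact mul_le_of_le_one_right hv (div_le_one_of_le₀ hcx (norm_nonneg x))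
  calc c * ‖radialMap T.symm x - radialMap T.symm y‖
      ≤ c * (2 * (v / ‖x‖) * ‖x - y‖ + (v - u)) :=
        mul_le_mul_of_nonneg_left (norm_radialMap_sub_le hyx huv hv) hc0
    _ = 2 * (c * (v / ‖x‖)) * ‖x - y‖ + c * (v - u) := by ring
    _ ≤ 2 * v * 1 + 1 := by gcongr
    _ ≤ 2 * j + 3 := by linarith

end Contraction

section Main

variable {E X : Type*} [NormedAddCommGroup E] [NormedSpace ℝ E] [PseudoMetricSpace X]

/-- The images of `x` and `y` lie in `closedBall 0 (j + 1)` for `j = ⌊T.symm ‖x‖⌋₊ > n`, at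
distance at most `η j`. -/
lemma dist_comp_radialMap_symm_le {f : E → X} {η : ℕ → ℝ} (hη : ∀ j, 0 < η j)
    (hf : ∀ j : ℕ, ∀ u ∈ closedBall (0 : E) (j + 1), ∀ v ∈ closedBall (0 : E) (j + 1),
      dist u v ≤ η j → dist (f u) (f v) ≤ 1 / (j + 1))
    {T : ℝ ≃o ℝ} (hT0 : T 0 = 0) (hT : ∀ u v, u ≤ v → v - u ≤ T v - T u)
    (hTη : ∀ (j : ℕ) (u v : ℝ), (j : ℝ) - 1 ≤ u → u ≤ v →
      (2 * j + 3) / η j * (v - u) ≤ T v - T u)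
    {n : ℕ} {x y : E} (hyx : ‖y‖ ≤ ‖x‖) (hx : T (n + 1) < ‖x‖) (hxy : dist x y < 1) :
    dist (f (radialMap T.symm x)) (f (radialMap T.symm y)) ≤ 1 / (n + 1) := by
  set j := ⌊T.symm ‖x‖⌋₊
  have hv : 0 ≤ T.symm ‖x‖ := T.symm_nonneg hT0 (norm_nonneg x)
  have hxj : T.symm ‖x‖ ≤ j + 1 := (Nat.lt_floor_add_one _).le
  have hnj : n + 1 ≤ j := Nat.le_floor (by exact_mod_cast (T.lt_symm_apply.mpr hx).le)
  have hc : 0 < (2 * (j : ℝ) + 3) / η j := by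
    have := hη j
    positivity
  have hcontract := norm_radialMap_symm_sub_le hT0 hT (by omega) hc.le (hTη j) hyx
    (dist_eq_norm x y ▸ hxy.le) (Nat.floor_le hv) hxj
  have hdist : dist (radialMap T.symm x) (radialMap T.symm y) ≤ η j := by
    refine le_of_mul_le_mul_left ?_ hc
    rwa [dist_eq_norm, div_mul_cancel₀ _ (hη j).ne']
  have hball : ∀ z : E, ‖z‖ ≤ ‖x‖ → radialMap T.symm z ∈ closedBall (0 : E) (j + 1) := by
    intro z hz
    rw [mem_closedBall_zero_iff, norm_radialMap (T.symm_map_zero hT0),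
      abs_of_nonneg (T.symm_nonneg hT0 (norm_nonneg z))]
    exact (T.symm.monotone hz).trans hxj
  calc _ ≤ 1 / ((j : ℝ) + 1) := hf j _ (hball x le_rfl) _ (hball y hyx) hdist
    _ ≤ 1 / (n + 1) := by
        gcongr
        exact_mod_cast (Nat.le_succ n).trans hnj

theorem exists_homeomorph_uniformContinuous_comp [ProperSpace E] {f : E → X}
    (hf : Continuous f) : ∃ ψ : E ≃ₜ E, UniformContinuous (f ∘ ψ) := by
  have hmodulus (j : ℕ) : ∃ η > 0, ∀ u ∈ closedBall (0 : E) (j + 1),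
      ∀ v ∈ closedBall (0 : E) (j + 1), dist u v ≤ η → dist (f u) (f v) ≤ 1 / (j + 1) :=
    Metric.uniformContinuousOn_iff_le.mp
      ((isCompact_closedBall _ _).uniformContinuousOn_of_continuous hf.continuousOn) _
      (by positivity)
  choose η hη hηf using hmodulus
  obtain ⟨T, hT0, hT, hTη⟩ := exists_orderIso_expanding fun j => (2 * j + 3) / η j
  refine ⟨radialHomeomorph T.symm (T.symm_map_zero hT0),
    uniformContinuous_of_forall_far (hf.comp (Homeomorph.continuous _)) fun ε hε => ?_⟩
  obtain ⟨n, hn⟩ := exists_nat_one_div_lt hε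
  exact ⟨T (n + 1), 1, one_pos, fun x y hyx hx hxy =>
    (dist_comp_radialMap_symm_le hη hηf hT0 hT hTη hyx hx hxy).trans_lt hn⟩

end Main

/-- For every continuous `f : ℝ^d → ℝ` there is a self-homeomorphism
`ψ` of `ℝ^d` such that `f ∘ ψ` is uniformly continuous. -/
theorem stmt_3 {d : ℕ} (f : EuclideanSpace ℝ (Fin d) → ℝ) (hf : Continuous f) :
    ∃ ψ : Homeomorph (EuclideanSpace ℝ (Fin d)) (EuclideanSpace ℝ (Fin d)),
      UniformContinuous (f ∘ ψ) :=
  exists_homeomorph_uniformContinuous_comp hf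
end
end

section
/- Let K be a family of continuous functions f : ℝ^d → ℝ that is uniformly equicontinuous on every closed ball in ℝ^d (i.e., for each ball B, sup_{f ∈ K} ω(f, B, δ) → 0 as δ → 0+, where ω(f, B, δ) = sup{|f(t₁) − f(t₂)| : t₁, t₂ ∈ B, |t₁ − t₂| ≤ δ}). Then there exists a homeomorphism ψ of ℝ^d onto itself such that the family {f ∘ ψ : f ∈ K} is uniformly equicontinuous on all of ℝ^d. -/
/-!
Stretch space radially, `u ↦ r ‖u‖ • u`, by a continuous nondecreasing factor `r ≥ 1` with
`r t ≥ 1 / η ⌊t⌋₊`, where `η n` is a modulus of equicontinuity for the tolerance `1 / (n + 1)` on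
the ball of radius `n + 2`. Since `β ‖u - v‖ ≤ ‖α • u - β • v‖` whenever `α ≥ β ≥ 0` and
`‖v‖ ≤ ‖u‖`, the stretch expands every distance at least by the factor `r` taken at the inner
point. Its inverse `ψ` is thus `1`-Lipschitz, and it shrinks `δ`-close pairs whose inner point lies
beyond radius `n` to `η n`-close pairs inside the ball of radius `n + 2`.
-/

open intervalIntegral

theorem Monotone.exists_continuous_monotone_ge {m : ℝ → ℝ} (hm : Monotone m) :
    ∃ r : ℝ → ℝ, Continuous r ∧ Monotone r ∧ m ≤ r := by
  have hint : ∀ a b, IntervalIntegrable m MeasureTheory.volume a b :=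
    fun _ _ => hm.intervalIntegrable
  have hshift : ∀ t, ∫ s in t..t + 1, m s = ∫ s in (0 : ℝ)..1, m (s + t) := fun t => by
    rw [integral_comp_add_right, zero_add, add_comm]
  have hshift_mono : ∀ t, Monotone fun s => m (s + t) := fun t => hm.comp (monotone_id.add_const t)
  refine ⟨fun t => ∫ s in t..t + 1, m s, ?_, fun t t' htt' => ?_, fun t => ?_⟩
  · have hprim := continuous_primitive hint 0
    refine ((hprim.comp (continuous_add_const 1)).sub hprim).congr fun t => ?_
    exact integral_interval_sub_left (hint _ _) (hint _ _)
  · simp only [hshift]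
    exact integral_mono_on zero_le_one (hshift_mono t).intervalIntegrable
      (hshift_mono t').intervalIntegrable fun s _ => hm (by linarith)
  · calc m t = ∫ _ in (0 : ℝ)..1, m t := by simp
      _ ≤ ∫ s in (0 : ℝ)..1, m (s + t) :=
        integral_mono_on zero_le_one intervalIntegrable_const (hshift_mono t).intervalIntegrable
          fun s hs => hm (le_add_of_nonneg_left hs.1)
      _ = _ := (hshift t).symm

theorem exists_continuous_monotone_ge_comp_floor (a : ℕ → ℝ) :
    ∃ r : ℝ → ℝ, Continuous r ∧ Monotone r ∧ ∀ t, a ⌊t⌋₊ ≤ r t := by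
  obtain ⟨r, hr_cont, hr_mono, hr⟩ :=
    ((partialSups a).monotone.comp Nat.floor_mono).exists_continuous_monotone_ge
  exact ⟨r, hr_cont, hr_mono, fun t => (le_partialSups a _).trans (hr t)⟩

section RadialStretch

variable {E : Type*} [NormedAddCommGroup E] [InnerProductSpace ℝ E]

theorem mul_norm_sub_le_norm_smul_sub_smul {α β : ℝ} {u v : E} (hβ : 0 ≤ β) (hβα : β ≤ α)
    (hvu : ‖v‖ ≤ ‖u‖) : β * ‖u - v‖ ≤ ‖α • u - β • v‖ := by
  have hinner : inner ℝ u v ≤ ‖u‖ ^ 2 :=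
    (real_inner_le_norm u v).trans (by nlinarith [norm_nonneg v])
  rw [← pow_le_pow_iff_left₀ (by positivity) (norm_nonneg _) two_ne_zero, mul_pow,
    norm_sub_sq_real, norm_sub_sq_real, norm_smul, norm_smul, inner_smul_left, inner_smul_right,
    Real.norm_of_nonneg hβ, Real.norm_of_nonneg (hβ.trans hβα)]
  simp only [conj_trivial]
  nlinarith [mul_le_mul_of_nonneg_left hinner (mul_nonneg hβ (sub_nonneg.2 hβα)),
    sq_nonneg (α - β), sq_nonneg ‖u‖]

def radialStretch (r : ℝ → ℝ) (u : E) : E := r ‖u‖ • u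

variable {r : ℝ → ℝ}

theorem mul_norm_sub_le_norm_radialStretch_sub (hr : Monotone r) (hr0 : ∀ t, 0 ≤ r t) (u v : E) :
    r (min ‖u‖ ‖v‖) * ‖u - v‖ ≤ ‖radialStretch r u - radialStretch r v‖ := by
  rcases le_total ‖v‖ ‖u‖ with hvu | huv
  · rw [min_eq_right hvu]
    exact mul_norm_sub_le_norm_smul_sub_smul (hr0 _) (hr hvu) hvu
  · rw [min_eq_left huv, norm_sub_rev u, norm_sub_rev (radialStretch r u)]
    exact mul_norm_sub_le_norm_smul_sub_smul (hr0 _) (hr huv) huv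

theorem antilipschitzWith_radialStretch (hr : Monotone r) (hr1 : ∀ t, 1 ≤ r t) :
    AntilipschitzWith 1 (radialStretch r : E → E) := by
  refine .of_le_mul_dist fun u v => ?_
  rw [NNReal.coe_one, one_mul, dist_eq_norm, dist_eq_norm]
  exact le_mul_of_one_le_left (norm_nonneg _) (hr1 _) |>.trans
    (mul_norm_sub_le_norm_radialStretch_sub hr (fun t => zero_le_one.trans (hr1 t)) u v)

theorem radialStretch_surjective (hr : Continuous r) (hr1 : ∀ t, 1 ≤ r t) :
    Function.Surjective (radialStretch r : E → E) := by
  intro x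
  rcases eq_or_ne x 0 with rfl | hx
  · exact ⟨0, smul_zero _⟩
  have hx' : 0 < ‖x‖ := norm_pos_iff.2 hx
  obtain ⟨t, ⟨ht0, -⟩, ht⟩ : ‖x‖ ∈ (fun t => t * r t) '' Set.Icc 0 ‖x‖ :=
    intermediate_value_Icc hx'.le (continuous_id.mul hr).continuousOn
      ⟨by simp [hx'.le], le_mul_of_one_le_right hx'.le (hr1 _)⟩
  refine ⟨(t / ‖x‖) • x, ?_⟩
  rw [radialStretch, norm_smul, Real.norm_of_nonneg (div_nonneg ht0 hx'.le),
    div_mul_cancel₀ _ hx'.ne', smul_smul, ← mul_div_assoc, mul_comm, show t * r t = ‖x‖ from ht,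
    div_self hx'.ne', one_smul]

noncomputable def radialStretchHomeomorph (hr_cont : Continuous r) (hr_mono : Monotone r)
    (hr1 : ∀ t, 1 ≤ r t) : E ≃ₜ E where
  toEquiv := .ofBijective (radialStretch r)
    ⟨(antilipschitzWith_radialStretch hr_mono hr1).injective, radialStretch_surjective hr_cont hr1⟩
  continuous_toFun := (hr_cont.comp continuous_norm).smul continuous_id
  continuous_invFun := ((antilipschitzWith_radialStretch hr_mono hr1).to_rightInverse
    (Equiv.ofBijective _ _).right_inv).continuous

theorem mul_norm_sub_le_norm_sub_radialStretchHomeomorph_symm (hr_cont : Continuous r)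
    (hr_mono : Monotone r) (hr1 : ∀ t, 1 ≤ r t) (x y : E) :
    let ψ := (radialStretchHomeomorph hr_cont hr_mono hr1).symm
    r (min ‖ψ x‖ ‖ψ y‖) * ‖ψ x - ψ y‖ ≤ ‖x - y‖ := by
  intro ψ
  have hψ : ∀ z, radialStretch r (ψ z) = z :=
    (radialStretchHomeomorph hr_cont hr_mono hr1).apply_symm_apply
  simpa only [hψ] using
    mul_norm_sub_le_norm_radialStretch_sub hr_mono (fun t => zero_le_one.trans (hr1 t)) (ψ x) (ψ y)

end RadialStretch

theorem max_norm_le_floor_min_add_two {F : Type*} [SeminormedAddCommGroup F] {u v : F}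
    (huv : ‖u - v‖ ≤ 1) : max ‖u‖ ‖v‖ ≤ ⌊min ‖u‖ ‖v‖⌋₊ + 2 := by
  have hfloor := Nat.lt_floor_add_one (min ‖u‖ ‖v‖)
  have hgap : max ‖u‖ ‖v‖ - min ‖u‖ ‖v‖ ≤ ‖u - v‖ := by
    rw [max_sub_min_eq_abs, abs_sub_comm]
    exact abs_norm_sub_norm_le u v
  linarith

theorem uniform_equicontinuity_comp_of_shell_contraction {F : Type*} [SeminormedAddCommGroup F]
    {K : Set (F → ℝ)} {η : ℕ → ℝ} {ψ : F → F}
    (hK : ∀ R : ℝ, ∀ ε > 0, ∃ δ > 0, ∀ f ∈ K, ∀ u v : F,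
      ‖u‖ ≤ R → ‖v‖ ≤ R → ‖u - v‖ ≤ δ → |f u - f v| < ε)
    (hη_pos : ∀ n, 0 < η n)
    (hη : ∀ n : ℕ, ∀ f ∈ K, ∀ u v : F,
      ‖u‖ ≤ n + 2 → ‖v‖ ≤ n + 2 → ‖u - v‖ ≤ η n → |f u - f v| < 1 / (n + 1))
    (hψ : ∀ x y, max 1 (η ⌊min ‖ψ x‖ ‖ψ y‖⌋₊)⁻¹ * ‖ψ x - ψ y‖ ≤ ‖x - y‖) :
    ∀ ε > 0, ∃ δ > 0, ∀ f ∈ K, ∀ x y : F, dist x y ≤ δ → |f (ψ x) - f (ψ y)| < ε := by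
  intro ε hε
  obtain ⟨N, hN⟩ := exists_nat_one_div_lt hε
  obtain ⟨δ, hδ_pos, hδ⟩ := hK (N + 2) ε hε
  refine ⟨min 1 δ, lt_min one_pos hδ_pos, fun f hf x y hxy => ?_⟩
  have hsep := (hψ x y).trans (dist_eq_norm x y ▸ hxy)
  set n := ⌊min ‖ψ x‖ ‖ψ y‖⌋₊
  have huv : ‖ψ x - ψ y‖ ≤ min 1 δ :=
    (le_mul_of_one_le_left (norm_nonneg _) (le_max_left _ _)).trans hsep
  obtain ⟨hx, hy⟩ := max_le_iff.1 (max_norm_le_floor_min_add_two (huv.trans (min_le_left _ _)))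
  rcases le_or_gt N n with hNn | hnN
  · have hη_sep : (η n)⁻¹ * ‖ψ x - ψ y‖ ≤ 1 :=
      ((mul_le_mul_of_nonneg_right (le_max_right _ _) (norm_nonneg _)).trans hsep).trans
        (min_le_left _ _)
    calc |f (ψ x) - f (ψ y)| < 1 / (n + 1) :=
          hη n f hf _ _ hx hy (by simpa using (inv_mul_le_iff₀ (hη_pos n)).1 hη_sep)
      _ ≤ 1 / (N + 1) := by gcongr
      _ < ε := hN
  · have hnN' : (n : ℝ) + 2 ≤ N + 2 := by exact_mod_cast Nat.add_le_add_right hnN.le 2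
    exact hδ f hf _ _ (hx.trans hnN') (hy.trans hnN') (huv.trans (min_le_right _ _))

theorem stmt_4_general {d : ℕ} (K : Set (EuclideanSpace ℝ (Fin d) → ℝ))
    (hKeq : ∀ (c : EuclideanSpace ℝ (Fin d)) (R : ℝ), ∀ ε > 0, ∃ δ > 0,
      ∀ f ∈ K, ∀ x y : EuclideanSpace ℝ (Fin d),
        dist x c ≤ R → dist y c ≤ R → dist x y ≤ δ → |f x - f y| < ε) :
    ∃ ψ : Homeomorph (EuclideanSpace ℝ (Fin d)) (EuclideanSpace ℝ (Fin d)),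
      ∀ ε > 0, ∃ δ > 0, ∀ f ∈ K, ∀ x y : EuclideanSpace ℝ (Fin d),
        dist x y ≤ δ → |f (ψ x) - f (ψ y)| < ε := by
  have hK : ∀ R : ℝ, ∀ ε > 0, ∃ δ > 0, ∀ f ∈ K, ∀ u v : EuclideanSpace ℝ (Fin d),
      ‖u‖ ≤ R → ‖v‖ ≤ R → ‖u - v‖ ≤ δ → |f u - f v| < ε := by
    simpa only [dist_eq_norm, sub_zero] using hKeq 0
  choose η hη_pos hη using fun n : ℕ => hK (n + 2) (1 / (n + 1)) (by positivity)
  obtain ⟨r, hr_cont, hr_mono, hr⟩ :=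
    exists_continuous_monotone_ge_comp_floor fun n => max 1 (η n)⁻¹
  have hr1 : ∀ t, 1 ≤ r t := fun t => (le_max_left _ _).trans (hr t)
  refine ⟨(radialStretchHomeomorph hr_cont hr_mono hr1).symm,
    uniform_equicontinuity_comp_of_shell_contraction hK hη_pos hη fun x y => ?_⟩
  exact (mul_le_mul_of_nonneg_right (hr _) (norm_nonneg _)).trans
    (mul_norm_sub_le_norm_sub_radialStretchHomeomorph_symm hr_cont hr_mono hr1 x y)

/-- If a family `K` of continuous functions on `ℝ^d` is uniformly
equicontinuous on every closed ball, then there is a self-homeomorphism `ψ` of `ℝ^d`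
such that `{f ∘ ψ : f ∈ K}` is uniformly equicontinuous on all of `ℝ^d`. -/
theorem stmt_4 {d : ℕ} (K : Set (EuclideanSpace ℝ (Fin d) → ℝ))
    (hKcont : ∀ f ∈ K, Continuous f)
    (hKeq : ∀ (c : EuclideanSpace ℝ (Fin d)) (R : ℝ), ∀ ε > 0, ∃ δ > 0,
      ∀ f ∈ K, ∀ x y : EuclideanSpace ℝ (Fin d),
        dist x c ≤ R → dist y c ≤ R → dist x y ≤ δ → |f x - f y| < ε) :
    ∃ ψ : Homeomorph (EuclideanSpace ℝ (Fin d)) (EuclideanSpace ℝ (Fin d)),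
      ∀ ε > 0, ∃ δ > 0, ∀ f ∈ K, ∀ x y : EuclideanSpace ℝ (Fin d),
        dist x y ≤ δ → |f (ψ x) - f (ψ y)| < ε :=
  stmt_4_general K hKeq
end

section
/- Let f : ℝ^d → ℝ be continuous and ψ : ℝ^d → ℝ^d a map. Suppose ℝ^d = ⋃_{j≥0} Ω_j where Ω_j = {x : r_j ≤ |x| ≤ r_{j+1}}, 0 = r_0 < r_1 < ⋯ → ∞, r_{j+1} − r_j > 1, and suppose that for constants 0 < b_j < 1 and nondecreasing functions ω_j with ω_j(δ) → 0 (δ → 0+): (a) |ψ(x) − ψ(y)| ≤ b_j|x − y| for x, y ∈ Ω_j; (b) |f(u) − f(v)| ≤ ω_j(|u − v|) whenever u, v ∈ ψ(Ω_j). Then for all 0 < δ ≤ 1, the modulus of continuity of f ∘ ψ on ℝ^d satisfies ω(f∘ψ, ℝ^d, δ) ≤ 2·sup_{j≥0} ω_j(b_j·δ). In particular, if sup_{j≥0} ω_j(b_j·δ) → 0 as δ → 0+, then f ∘ ψ is uniformly continuous on ℝ^d. -/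
open Filter Set

lemma stmt_14_aux {d : ℕ} (f : EuclideanSpace ℝ (Fin d) → ℝ)
    (ψ : EuclideanSpace ℝ (Fin d) → EuclideanSpace ℝ (Fin d))
    (r : ℕ → ℝ) (hr0 : r 0 = 0) (hrm : StrictMono r)
    (hrtop : Tendsto r atTop atTop) (hthick : ∀ j, 1 < r (j + 1) - r j)
    (Ω : ℕ → Set (EuclideanSpace ℝ (Fin d)))
    (hΩ : ∀ j, Ω j = {x | r j ≤ ‖x‖ ∧ ‖x‖ ≤ r (j + 1)})
    (b : ℕ → ℝ) (hb : ∀ j, 0 < b j ∧ b j < 1)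
    (ω : ℕ → ℝ → ℝ)
    (hωmono : ∀ j, ∀ s t : ℝ, 0 ≤ s → s ≤ t → ω j s ≤ ω j t)
    (hωnonneg : ∀ j, ∀ t : ℝ, 0 ≤ t → 0 ≤ ω j t)
    (ha : ∀ j, ∀ x ∈ Ω j, ∀ y ∈ Ω j, ‖ψ x - ψ y‖ ≤ b j * ‖x - y‖)
    (hbnd : ∀ j, ∀ u ∈ ψ '' Ω j, ∀ v ∈ ψ '' Ω j, |f u - f v| ≤ ω j ‖u - v‖)
    (δ : ℝ) (hδ : 0 < δ) (hδ1 : δ ≤ 1) (C : ℝ) (hC : ∀ j, ω j (b j * δ) ≤ C)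
    (x y : EuclideanSpace ℝ (Fin d)) (hle : ‖x‖ ≤ ‖y‖) (hxy : ‖x - y‖ ≤ δ) :
    |f (ψ x) - f (ψ y)| ≤ 2 * C := by
  have hC0 : 0 ≤ C := le_trans (hωnonneg 0 _ (mul_nonneg (hb 0).1.le hδ.le)) (hC 0)
  have hex : ∃ k, ‖x‖ ≤ r (k + 1) := by
    obtain ⟨k, hk⟩ := (hrtop.eventually_ge_atTop ‖x‖).exists
    exact ⟨k, hk.trans (hrm (Nat.lt_succ_self k)).le⟩
  set j := Nat.find hex with hjdef
  have hj2 : ‖x‖ ≤ r (j + 1) := Nat.find_spec hex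
  have hj1 : r j ≤ ‖x‖ := by
    rcases Nat.eq_zero_or_pos j with h0 | hpos
    · rw [h0, hr0]; exact norm_nonneg x
    · have hmin := Nat.find_min hex (Nat.pred_lt hpos.ne')
      have hpe : (Nat.find hex).pred + 1 = j := Nat.succ_pred_eq_of_pos hpos
      rw [hpe] at hmin
      exact (not_le.mp hmin).le
  have hxΩ : x ∈ Ω j := by rw [hΩ]; exact ⟨hj1, hj2⟩
  -- generic estimate on one shell
  have est : ∀ k, ∀ u ∈ Ω k, ∀ v ∈ Ω k, ‖u - v‖ ≤ δ → |f (ψ u) - f (ψ v)| ≤ C := by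
    intro k u hu v hv huv
    have h1 : |f (ψ u) - f (ψ v)| ≤ ω k ‖ψ u - ψ v‖ :=
      hbnd k _ ⟨u, hu, rfl⟩ _ ⟨v, hv, rfl⟩
    have h2 : ‖ψ u - ψ v‖ ≤ b k * δ :=
      (ha k u hu v hv).trans (mul_le_mul_of_nonneg_left huv (hb k).1.le)
    exact h1.trans ((hωmono k _ _ (norm_nonneg _) h2).trans (hC k))
  rcases le_or_gt ‖y‖ (r (j + 1)) with hy | hy
  · have hyΩ : y ∈ Ω j := by rw [hΩ]; exact ⟨hj1.trans hle, hy⟩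
    linarith [est j x hxΩ y hyΩ hxy]
  · -- adjacent shells
    have hyx : ‖y - x‖ ≤ δ := by rwa [norm_sub_rev]
    have hy2 : ‖y‖ ≤ r (j + 2) := by
      have := norm_add_le x (y - x)
      simp only [add_sub_cancel] at this
      have ht := hthick (j + 1)
      have : ‖y‖ ≤ r (j + 1) + 1 := by linarith
      linarith
    set g : ℝ → ℝ := fun t => ‖x + t • (y - x)‖ with hgdef
    have hgc : Continuous g := (continuous_const.add (continuous_id.smul continuous_const)).norm
    have hg0 : g 0 = ‖x‖ := by simp [hgdef]
    have hg1 : g 1 = ‖y‖ := by simp [hgdef]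
    have hmem : r (j + 1) ∈ Icc (g 0) (g 1) := by rw [hg0, hg1]; exact ⟨hj2, hy.le⟩
    obtain ⟨t, ht01, hgt⟩ := intermediate_value_Icc (by norm_num : (0:ℝ) ≤ 1)
      hgc.continuousOn hmem
    set z := x + t • (y - x) with hzdef
    have hzn : ‖z‖ = r (j + 1) := hgt
    have hxz : ‖x - z‖ ≤ δ := by
      have : x - z = (-t) • (y - x) := by rw [hzdef]; module
      rw [this, norm_smul]
      have : ‖(-t : ℝ)‖ = t := by rw [norm_neg, Real.norm_eq_abs, abs_of_nonneg ht01.1]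
      rw [this]
      calc t * ‖y - x‖ ≤ 1 * ‖y - x‖ :=
            mul_le_mul_of_nonneg_right ht01.2 (norm_nonneg _)
        _ ≤ δ := by rw [one_mul]; exact hyx
    have hzy : ‖z - y‖ ≤ δ := by
      have : z - y = (1 - t) • (x - y) := by rw [hzdef]; module
      rw [this, norm_smul, Real.norm_eq_abs, abs_of_nonneg (by linarith [ht01.2])]
      calc (1 - t) * ‖x - y‖ ≤ 1 * ‖x - y‖ :=
            mul_le_mul_of_nonneg_right (by linarith [ht01.1]) (norm_nonneg _)
        _ ≤ δ := by rw [one_mul]; exact hxy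
    have hzΩ1 : z ∈ Ω j := by
      rw [hΩ]; simp only [mem_setOf_eq, hzn]
      exact ⟨(hrm (Nat.lt_succ_self j)).le, le_refl _⟩
    have hzΩ2 : z ∈ Ω (j + 1) := by
      rw [hΩ]; simp only [mem_setOf_eq, hzn]
      exact ⟨le_refl _, (hrm (Nat.lt_succ_self (j + 1))).le⟩
    have hyΩ : y ∈ Ω (j + 1) := by rw [hΩ]; exact ⟨hy.le, hy2⟩
    have e1 := est j x hxΩ z hzΩ1 hxz
    have e2 := est (j + 1) z hzΩ2 y hyΩ hzy
    calc |f (ψ x) - f (ψ y)| ≤ |f (ψ x) - f (ψ z)| + |f (ψ z) - f (ψ y)| :=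
          abs_sub_le _ _ _
      _ ≤ 2 * C := by linarith

/-- Modulus-of-continuity estimate for `f ∘ ψ` via shells. If `ψ`
contracts by `b_j` on each shell `Ω_j` (of thickness `> 1`) and `f` has modulus `ω_j`
on `ψ(Ω_j)`, then `ω(f∘ψ, ℝ^d, δ) ≤ 2·sup_j ω_j(b_j δ)` for `0 < δ ≤ 1`; in
particular, if `sup_j ω_j(b_j δ) → 0` as `δ → 0+`, then `f ∘ ψ` is uniformly
continuous. -/
theorem stmt_14 {d : ℕ} (f : EuclideanSpace ℝ (Fin d) → ℝ) (hf : Continuous f)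
    (ψ : EuclideanSpace ℝ (Fin d) → EuclideanSpace ℝ (Fin d))
    (r : ℕ → ℝ) (hr0 : r 0 = 0) (hrm : StrictMono r)
    (hrtop : Tendsto r atTop atTop) (hthick : ∀ j, 1 < r (j + 1) - r j)
    (Ω : ℕ → Set (EuclideanSpace ℝ (Fin d)))
    (hΩ : ∀ j, Ω j = {x | r j ≤ ‖x‖ ∧ ‖x‖ ≤ r (j + 1)})
    (b : ℕ → ℝ) (hb : ∀ j, 0 < b j ∧ b j < 1)
    (ω : ℕ → ℝ → ℝ)
    (hωmono : ∀ j, ∀ s t : ℝ, 0 ≤ s → s ≤ t → ω j s ≤ ω j t)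
    (hωnonneg : ∀ j, ∀ t : ℝ, 0 ≤ t → 0 ≤ ω j t)
    (hωlim : ∀ j, Tendsto (ω j) (nhdsWithin 0 (Ioi 0)) (nhds 0))
    (ha : ∀ j, ∀ x ∈ Ω j, ∀ y ∈ Ω j, ‖ψ x - ψ y‖ ≤ b j * ‖x - y‖)
    (hbnd : ∀ j, ∀ u ∈ ψ '' Ω j, ∀ v ∈ ψ '' Ω j, |f u - f v| ≤ ω j ‖u - v‖) :
    (∀ δ : ℝ, 0 < δ → δ ≤ 1 → ∀ C : ℝ, (∀ j, ω j (b j * δ) ≤ C) →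
      ∀ x y : EuclideanSpace ℝ (Fin d), ‖x - y‖ ≤ δ →
        |f (ψ x) - f (ψ y)| ≤ 2 * C) ∧
    ((∀ ε > (0 : ℝ), ∃ δ > (0 : ℝ), ∀ j, ω j (b j * δ) ≤ ε) →
      UniformContinuous (f ∘ ψ)) := by
  have main : ∀ δ : ℝ, 0 < δ → δ ≤ 1 → ∀ C : ℝ, (∀ j, ω j (b j * δ) ≤ C) →
      ∀ x y : EuclideanSpace ℝ (Fin d), ‖x - y‖ ≤ δ →
        |f (ψ x) - f (ψ y)| ≤ 2 * C := by
    intro δ hδ hδ1 C hC x y hxy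
    rcases le_total ‖x‖ ‖y‖ with hle | hle
    · exact stmt_14_aux f ψ r hr0 hrm hrtop hthick Ω hΩ b hb ω hωmono hωnonneg
        ha hbnd δ hδ hδ1 C hC x y hle hxy
    · rw [abs_sub_comm]
      exact stmt_14_aux f ψ r hr0 hrm hrtop hthick Ω hΩ b hb ω hωmono hωnonneg
        ha hbnd δ hδ hδ1 C hC y x hle (by rwa [norm_sub_rev])
  refine ⟨main, fun h => ?_⟩
  rw [Metric.uniformContinuous_iff]
  intro ε hε
  obtain ⟨δ0, hδ0, hδ0ε⟩ := h (ε / 4) (by linarith)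
  refine ⟨min δ0 1, lt_min hδ0 one_pos, fun {x y} hxy => ?_⟩
  have hδpos : 0 < min δ0 1 := lt_min hδ0 one_pos
  have hCj : ∀ j, ω j (b j * min δ0 1) ≤ ε / 4 := fun j =>
    (hωmono j _ _ (mul_nonneg (hb j).1.le hδpos.le)
      (mul_le_mul_of_nonneg_left (min_le_left _ _) (hb j).1.le)).trans (hδ0ε j)
  have := main (min δ0 1) hδpos (min_le_right _ _) (ε / 4) hCj x y
    (by rw [← dist_eq_norm]; exact hxy.le)
  calc dist ((f ∘ ψ) x) ((f ∘ ψ) y) = |f (ψ x) - f (ψ y)| := by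
        simp [Function.comp, Real.dist_eq]
    _ ≤ 2 * (ε / 4) := this
    _ < ε := by linarith
end

section
/- Suppose there exists a continuous 2π-periodic function f : ℝ → ℝ with f(0) = 0 such that f ∘ h₁ does not lie in the Wiener algebra A(𝕋) for any homeomorphism h₁ of the circle 𝕋 (where A(𝕋) is the space of functions on 𝕋 with absolutely convergent Fourier series, and periodic functions on ℝ are identified with functions on 𝕋). Assume furthermore the following two facts: (i) B(ℝ) is invariant under composition with nondegenerate affine self-maps of ℝ; (ii) if a function m₀ ∈ B(ℝ) vanishes outside an interval of length 2π, then its 2π-periodic extension lies in A(𝕋). Then the function f₀ : ℝ → ℝ defined by f₀ = f on [0, 2π] and f₀ = 0 outside [0, 2π] is a bounded continuous function such that f₀ ∘ h ∉ B(ℝ) for every homeomorphism h of ℝ onto itself. -/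
open MeasureTheory Real Set

/-- A `2π`-periodic function on `ℝ` (i.e. a function on `𝕋 = ℝ/2πℤ`) belongs to
the Wiener algebra `A(𝕋)`: it has an absolutely convergent Fourier series. -/
def MemWienerAlgebra (g : ℝ → ℂ) : Prop :=
  Function.Periodic g (2 * π) ∧
  ∃ c : ℤ → ℂ, Summable (fun n => ‖c n‖) ∧
    ∀ t : ℝ, g t = ∑' n : ℤ, c n * Complex.exp ((n : ℂ) * t * Complex.I)

/-- Membership in `B(ℝ)`, the algebra of Fourier–Stieltjes transforms of finite
complex Borel measures on `ℝ` (a finite complex measure is encoded as `w·μ` with `μ`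
a finite positive measure and `w ∈ L¹(μ)`). -/
def MemBR (m : ℝ → ℂ) : Prop :=
  ∃ μ : Measure ℝ, IsFiniteMeasure μ ∧ ∃ w : ℝ → ℂ, Integrable w μ ∧
    ∀ ξ : ℝ, m ξ = ∫ t, Complex.exp (-(ξ * t) * Complex.I) * w t ∂μ

/-- `H : ℝ → ℝ` is a lift of a self-homeomorphism of the circle `𝕋 = ℝ/2πℤ`. -/
def IsCircleHomeoLift (H : ℝ → ℝ) : Prop :=
  Continuous H ∧
    ((StrictMono H ∧ ∀ t, H (t + 2 * π) = H t + 2 * π) ∨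
     (StrictAnti H ∧ ∀ t, H (t + 2 * π) = H t - 2 * π))

/-! Precomposing `h` with an affine map gives an increasing homeomorphism `G` fixing `0` and
`2π`, and by (i) `f₀ ∘ G ∈ B(ℝ)`. This function vanishes off `[0, 2π]` and agrees on `[0, 2π)`
with `f ∘ H`, where `H` is the lift of the circle homeomorphism induced by `G|[0, 2π]`; so (ii)
puts `f ∘ H` in `A(𝕋)`, contradicting the choice of `f`. -/

theorem continuous_ite_Icc {f : ℝ → ℝ} (hf : Continuous f) {a b : ℝ} (hab : a ≤ b)
    (ha : f a = 0) (hb : f b = 0) :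
    Continuous fun t => if t ∈ Icc a b then f t else 0 := by
  refine hf.if (fun t ht => ?_) continuous_const
  rw [show {t | t ∈ Icc a b} = Icc a b from rfl, frontier_Icc hab] at ht
  rcases ht with rfl | rfl <;> assumption

theorem Homeomorph.exists_affine_strictMono_comp (h : ℝ ≃ₜ ℝ) {p q : ℝ} (hpq : p < q) :
    ∃ α β : ℝ, α ≠ 0 ∧ StrictMono (fun t => h (α * t + β)) ∧
      h (α * p + β) = p ∧ h (α * q + β) = q := by
  obtain ⟨x, hx⟩ := h.surjective p
  obtain ⟨y, hy⟩ := h.surjective q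
  have hxy : x ≠ y := by rintro rfl; exact hpq.ne (hx.symm.trans hy)
  set α := (y - x) / (q - p)
  have hα : α ≠ 0 := div_ne_zero (sub_ne_zero.2 hxy.symm) (sub_ne_zero.2 hpq.ne')
  have hp : α * p + (x - α * p) = x := by ring
  have hq : α * q + (x - α * p) = y := by
    linear_combination div_mul_cancel₀ (y - x) (sub_ne_zero.2 hpq.ne')
  refine ⟨α, x - α * p, hα, ?_, by rw [hp, hx], by rw [hq, hy]⟩
  have hinj : Function.Injective (fun t => h (α * t + (x - α * p))) := fun s t hst => by
    simpa [hα] using h.injective hst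
  refine ((h.continuous.comp (by fun_prop)).strictMono_of_inj hinj).resolve_right fun hanti => ?_
  have hqp : q < p := by
    simpa only [Function.comp_apply, hp, hq, hx, hy] using hanti hpq
  exact hqp.not_gt hpq

section DegOneExtend

variable {T : ℝ} (hT : 0 < T) (G : ℝ → ℝ)

noncomputable def degOneExtend (t : ℝ) : ℝ :=
  G (toIcoMod hT 0 t) + toIcoDiv hT 0 t • T

theorem degOneExtend_add_zsmul (t : ℝ) (k : ℤ) :
    degOneExtend hT G (t + k • T) = degOneExtend hT G t + k • T := by
  simp only [degOneExtend, toIcoMod_add_zsmul, toIcoDiv_add_zsmul, add_smul, add_assoc]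

theorem degOneExtend_add_period (t : ℝ) :
    degOneExtend hT G (t + T) = degOneExtend hT G t + T := by
  simpa using degOneExtend_add_zsmul hT G t 1

theorem degOneExtend_of_mem_Ico {t : ℝ} (ht : t ∈ Ico 0 T) : degOneExtend hT G t = G t := by
  have hmod : toIcoMod hT 0 t = t := (toIcoMod_eq_self hT).2 (by rwa [zero_add])
  have hdiv : toIcoDiv hT 0 t = 0 := by
    simpa [hmod, hT.ne'] using toIcoDiv_zsmul_sub_toIcoMod hT 0 t
  simp [degOneExtend, hmod, hdiv]

variable {G}

theorem strictMono_degOneExtend (hG : StrictMonoOn G (Icc 0 T)) (hG0 : G 0 = 0) (hGT : G T = T) :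
    StrictMono (degOneExtend hT G) := by
  intro s t hst
  have hs := toIcoMod_mem_Ico' hT s
  have ht := toIcoMod_mem_Ico' hT t
  have hdiv : toIcoDiv hT 0 s ≤ toIcoDiv hT 0 t := by
    simp only [toIcoDiv_eq_floor, sub_zero]
    exact Int.floor_mono (div_le_div_of_nonneg_right hst.le hT.le)
  rcases hdiv.eq_or_lt with heq | hlt
  · have hmod : toIcoMod hT 0 s < toIcoMod hT 0 t := by
      have := toIcoDiv_zsmul_sub_toIcoMod hT 0 s
      have := toIcoDiv_zsmul_sub_toIcoMod hT 0 t
      rw [heq] at *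
      linarith
    have := hG (Ico_subset_Icc_self hs) (Ico_subset_Icc_self ht) hmod
    simp only [degOneExtend, heq]
    linarith
  · have hGs : G (toIcoMod hT 0 s) < T :=
      (hG (Ico_subset_Icc_self hs) (right_mem_Icc.2 hT.le) hs.2).trans_eq hGT
    have hGt : 0 ≤ G (toIcoMod hT 0 t) :=
      hG0.symm.trans_le (hG.monotoneOn (left_mem_Icc.2 hT.le) (Ico_subset_Icc_self ht) ht.1)
    have hstep : toIcoDiv hT 0 s • T + T ≤ toIcoDiv hT 0 t • T := by
      simpa [add_smul] using zsmul_le_zsmul_left hT.le (Int.add_one_le_of_lt hlt)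
    simp only [degOneExtend]
    linarith

theorem surjective_degOneExtend (hG : ContinuousOn G (Icc 0 T)) (hG0 : G 0 = 0) (hGT : G T = T) :
    Function.Surjective (degOneExtend hT G) := by
  intro y
  obtain ⟨t, ht, hGt⟩ := intermediate_value_Icc hT.le hG
    (by rw [hG0, hGT]; exact Ico_subset_Icc_self (toIcoMod_mem_Ico' hT y))
  have htT : t ≠ T := by
    rintro rfl
    exact (toIcoMod_mem_Ico' hT y).2.ne (hGt.symm.trans hGT)
  refine ⟨t + toIcoDiv hT 0 y • T, ?_⟩
  rw [degOneExtend_add_zsmul, degOneExtend_of_mem_Ico hT G ⟨ht.1, ht.2.lt_of_ne htT⟩, hGt,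
    toIcoMod_add_toIcoDiv_zsmul]

end DegOneExtend

theorem isCircleHomeoLift_degOneExtend {G : ℝ → ℝ} (hGc : ContinuousOn G (Icc 0 (2 * π)))
    (hGm : StrictMonoOn G (Icc 0 (2 * π))) (hG0 : G 0 = 0) (hGT : G (2 * π) = 2 * π) :
    IsCircleHomeoLift (degOneExtend two_pi_pos G) := by
  have hmono := strictMono_degOneExtend two_pi_pos hGm hG0 hGT
  exact ⟨hmono.monotone.continuous_of_surjective (surjective_degOneExtend two_pi_pos hGc hG0 hGT),
    Or.inl ⟨hmono, degOneExtend_add_period two_pi_pos G⟩⟩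

/-- If `f` is a continuous `2π`-periodic function with `f 0 = 0` such
that `f ∘ h₁ ∉ A(𝕋)` for every circle homeomorphism `h₁`, then — granted (i) the
affine invariance of `B(ℝ)` and (ii) the periodic-extension property — the function
`f₀` equal to `f` on `[0, 2π]` and `0` elsewhere is bounded and continuous and
satisfies `f₀ ∘ h ∉ B(ℝ)` for every self-homeomorphism `h` of `ℝ`. -/
theorem stmt_16 (f : ℝ → ℝ) (hfc : Continuous f)
    (hfper : Function.Periodic f (2 * π)) (hf0 : f 0 = 0)
    (hfA : ∀ H : ℝ → ℝ, IsCircleHomeoLift H →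
      ¬ MemWienerAlgebra (fun t => ((f (H t) : ℝ) : ℂ)))
    (hi : ∀ m : ℝ → ℂ, MemBR m → ∀ a b : ℝ, a ≠ 0 →
      MemBR (fun ξ => m (a * ξ + b)))
    (hii : ∀ m : ℝ → ℂ, MemBR m → ∀ c : ℝ,
      (∀ t, t ∉ Icc c (c + 2 * π) → m t = 0) →
      ∀ g : ℝ → ℂ, Function.Periodic g (2 * π) →
        (∀ t ∈ Ico c (c + 2 * π), g t = m t) → MemWienerAlgebra g)
    (f₀ : ℝ → ℝ) (hf₀ : ∀ t, f₀ t = if t ∈ Icc 0 (2 * π) then f t else 0) :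
    Continuous f₀ ∧ (∃ C : ℝ, ∀ t, |f₀ t| ≤ C) ∧
      ∀ h : Homeomorph ℝ ℝ, ¬ MemBR (fun t => ((f₀ (h t) : ℝ) : ℂ)) := by
  have hT : 0 < 2 * π := two_pi_pos
  have hcont : Continuous f₀ := funext hf₀ ▸
    continuous_ite_Icc hfc hT.le hf0 (by rw [← zero_add (2 * π), hfper, hf0])
  have hsupp : HasCompactSupport f₀ :=
    HasCompactSupport.intro isCompact_Icc fun t ht => by rw [hf₀, if_neg ht]
  refine ⟨hcont, hcont.bounded_above_of_compact_support hsupp, fun h hmem => ?_⟩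
  obtain ⟨α, β, hα, hGm, hG0, hGT⟩ := h.exists_affine_strictMono_comp hT
  set G : ℝ → ℝ := fun t => h (α * t + β)
  replace hG0 : G 0 = 0 := hG0
  replace hGT : G (2 * π) = 2 * π := hGT
  have hGc : Continuous G := h.continuous.comp (by fun_prop)
  have hGIcc : ∀ t, G t ∈ Icc 0 (2 * π) ↔ t ∈ Icc 0 (2 * π) := fun t => by
    simpa [hG0, hGT] using
      congrArg (t ∈ ·) ((OrderEmbedding.ofStrictMono G hGm).preimage_Icc 0 (2 * π))
  refine hfA _ (isCircleHomeoLift_degOneExtend hGc.continuousOn (hGm.strictMonoOn _) hG0 hGT)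
    (hii _ (hi _ hmem α β hα) 0 (fun t ht => ?_) _ (fun t => ?_) (fun t ht => ?_))
  · rw [zero_add, ← hGIcc] at ht
    show ((f₀ (G t) : ℝ) : ℂ) = 0
    rw [hf₀, if_neg ht, Complex.ofReal_zero]
  · simp only [degOneExtend_add_period, hfper _]
  · rw [zero_add] at ht
    show ((f _ : ℝ) : ℂ) = ((f₀ (G t) : ℝ) : ℂ)
    rw [degOneExtend_of_mem_Ico hT G ht, hf₀, if_pos ((hGIcc t).2 (Ico_subset_Icc_self ht))]
end
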